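/- arXiv:2308.15478 — 2 statements merged into one kernel-verified Lean document; each statement's English description precedes it below -/
import Mathlib

section
/- Let B be a real P×Q matrix with singular values σ₁(B) ≥ … ≥ σ_{min(P,Q)}(B), and let S = diag(s₁, …, s_P) with s₁ ≥ s₂ ≥ … ≥ s_P > 0. Then for every P×P real orthogonal matrix U, ‖S⁻¹ Uᵀ B‖_F² ≥ Σ_{j=1}^{min(P,Q)} σ_j(B)²/s_j², and this bound is attained: the minimum of ‖S⁻¹ Uᵀ B‖_F² over all orthogonal U equals Σ_{j=1}^{min(P,Q)} σ_j(B)²/s_j², attained when the columns of U are left singular vectors of B ordered by decreasing singular value. (This is the alignment step in the proof of the paper's equivalent-optimization lemma.) -/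
open Matrix Set

noncomputable section

/-- An admissible penalty: nonnegative, minimized at `ω 1 = 0`, strictly decreasing on `(0,1]`
and strictly increasing on `[1,∞)`. -/
def Admissible (ω : ℝ → ℝ) : Prop :=
  (∀ x, 0 ≤ ω x) ∧ ω 1 = 0 ∧ StrictAntiOn ω (Set.Ioc 0 1) ∧ StrictMonoOn ω (Set.Ici 1)

/-- The scalar effective penalty `ω̃ v = inf_{z ≥ 1} (ω z + v² / z²)`. -/
def effPenalty (ω : ℝ → ℝ) (v : ℝ) : ℝ :=
  sInf ((fun z => ω z + v ^ 2 / z ^ 2) '' Set.Ici (1 : ℝ))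

/-- The joint penalty `(ω₁ ⊕ ω₂) v = inf_{1 ≤ z ≤ v} (ω₁ z + ω₂ (v / z))`. -/
def jointPenalty (ω₁ ω₂ : ℝ → ℝ) (v : ℝ) : ℝ :=
  sInf ((fun z => ω₁ z + ω₂ (v / z)) '' Set.Icc (1 : ℝ) v)

/-- The (unordered) singular values of a real `P × Q` matrix: square roots of the
eigenvalues of `Xᴴ X`. -/
def svals {P Q : ℕ} (X : Matrix (Fin P) (Fin Q) ℝ) (j : Fin Q) : ℝ :=
  Real.sqrt ((show (Xᵀ * X).IsHermitian by
    simpa [Matrix.conjTranspose_eq_transpose_of_trivial] using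
      Matrix.isHermitian_conjTranspose_mul_self X).eigenvalues j)

/-- Singular values sorted in decreasing order: `svalsDesc X j` is the `j`-th largest
singular value of `X`. -/
def svalsDesc {P Q : ℕ} (X : Matrix (Fin P) (Fin Q) ℝ) (j : Fin Q) : ℝ :=
  svals X (Tuple.sort (fun i => - svals X i) j)

/-- The spectral penalty `Ω_ω M = Σ_j ω (σ_j M)`. -/
def specPenalty (ω : ℝ → ℝ) {P : ℕ} (M : Matrix (Fin P) (Fin P) ℝ) : ℝ :=
  ∑ j, ω (svals M j)

/-- Frobenius norm squared. -/
def frobSq {P Q : ℕ} (X : Matrix (Fin P) (Fin Q) ℝ) : ℝ :=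
  ∑ i, ∑ j, X i j ^ 2

/-- Euclidean norm of a vector. -/
def enorm2 {P : ℕ} (v : Fin P → ℝ) : ℝ :=
  Real.sqrt (∑ j, v j ^ 2)

/-- The induced effective spectral penalty `Ω̃_g B = Σ_{j=1}^{min(P,Q)} g̃(σ_j B)`. -/
def effSpec (g : ℝ → ℝ) {P Q : ℕ} (B : Matrix (Fin P) (Fin Q) ℝ) : ℝ :=
  ∑ j : Fin (min P Q), effPenalty g (svalsDesc B (Fin.castLE (min_le_right P Q) j))

/-
Let `T` be `B` viewed as a map `ℝ^Q → ℝ^P`, with right singular vectors `v_j`, singular values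
`σ_j` and left singular vectors `w_j = T v_j / σ_j`, and let `u_i` be the columns of `U`. Then
`‖S⁻¹ Uᵀ B‖_F² = ∑ᵢ s_i⁻² ‖Tᵀ u_i‖²` and `‖Tᵀ u_i‖² = ∑ⱼ σ_j² ⟪u_i, w_j⟫²`, where the weights
`⟪u_i, w_j⟫²` form a doubly substochastic array. Hence (Ky Fan) `∑_{i<k} ‖Tᵀ u_i‖² ≤ ∑_{j<k} σ_j²`
for every `k`, with equality for `k = P`. As the weights `s_i⁻²` increase with `i`, summation by
parts turns these partial-sum bounds into the lower bound. Completing the `w_j` with `σ_j > 0` to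
an orthonormal basis makes `‖Tᵀ u_i‖² = σ_i²` for every `i`, so the bound is attained.
-/

open Finset Module
open scoped RealInnerProductSpace

theorem sum_range_mul_le_sum_range_mul_of_sum_range_le {n : ℕ} {c x y : ℕ → ℝ}
    (hc : MonotoneOn c (Set.Iio n)) (hpart : ∀ k < n, ∑ i ∈ range k, x i ≤ ∑ i ∈ range k, y i)
    (htot : ∑ i ∈ range n, x i = ∑ i ∈ range n, y i) :
    ∑ i ∈ range n, c i * y i ≤ ∑ i ∈ range n, c i * x i := by
  have hparts := sum_range_by_parts c (fun i => x i - y i) n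
  simp only [smul_eq_mul, sum_sub_distrib, htot, sub_self, mul_zero, zero_sub] at hparts
  have hterm : ∀ i ∈ range (n - 1),
      0 ≤ (c (i + 1) - c i) * (∑ j ∈ range (i + 1), y j - ∑ j ∈ range (i + 1), x j) := by
    intro i hi
    have hi : i + 1 < n := by simp at hi; omega
    exact mul_nonneg (sub_nonneg.2 (hc (by simp; omega) (by simpa using hi) (by omega)))
      (sub_nonneg.2 (hpart _ hi))
  have := sum_nonneg hterm
  simp only [mul_sub, sum_sub_distrib] at this hparts ⊢
  linarith

theorem sum_mul_le_sum_range_of_antitone {n K : ℕ} {a : ℕ → ℝ} {t : Fin n → ℝ}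
    (ha : Antitone a) (ha0 : ∀ k, 0 ≤ a k) (ht0 : ∀ j, 0 ≤ t j) (ht1 : ∀ j, t j ≤ 1)
    (htK : ∑ j, t j ≤ K) :
    ∑ j : Fin n, a j * t j ≤ ∑ k ∈ range K, a k := by
  set c := a K
  -- Split `a` at the level `a K`: only its first `K` terms exceed it, and `∑ t ≤ K`
  -- pays for the rest.
  have hexcess : ∑ k ∈ range n, max (a k - c) 0 ≤ ∑ k ∈ range K, (a k - c) := by
    calc ∑ k ∈ range n, max (a k - c) 0 ≤ ∑ k ∈ range (n + K), max (a k - c) 0 :=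
          sum_le_sum_of_subset_of_nonneg (range_subset_range.2 (by omega))
            (fun _ _ _ => le_max_right _ _)
      _ = ∑ k ∈ range K, max (a k - c) 0 := by
          refine (sum_subset (range_subset_range.2 (by omega)) fun k _ hk => ?_).symm
          simpa using ha (not_lt.1 (by simpa using hk))
      _ = ∑ k ∈ range K, (a k - c) :=
          sum_congr rfl fun k hk => max_eq_left (sub_nonneg.2 (ha (by simp at hk; omega)))
  have hpoint : ∀ j : Fin n, a j * t j ≤ max (a j - c) 0 + c * t j := by
    intro j
    rcases le_total c (a j) with h | h
    · nlinarith [ht0 j, ht1 j, le_max_left (a j - c) 0]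
    · nlinarith [ht0 j, le_max_right (a j - c) 0]
  calc ∑ j : Fin n, a j * t j ≤ ∑ j : Fin n, (max (a j - c) 0 + c * t j) :=
        sum_le_sum fun j _ => hpoint j
    _ = ∑ k ∈ range n, max (a k - c) 0 + c * ∑ j, t j := by
        rw [sum_add_distrib, mul_sum, Fin.sum_univ_eq_sum_range (fun k => max (a k - c) 0)]
    _ ≤ ∑ k ∈ range K, (a k - c) + c * K := by
        gcongr
        exact ha0 K
    _ = ∑ k ∈ range K, a k := by
        simp only [sum_sub_distrib, sum_const, card_range, nsmul_eq_mul]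
        ring

namespace LinearMap

variable {E F : Type*} [NormedAddCommGroup E] [InnerProductSpace ℝ E] [FiniteDimensional ℝ E]
  [NormedAddCommGroup F] [InnerProductSpace ℝ F] [FiniteDimensional ℝ F] (T : E →ₗ[ℝ] F)

def rightSingularBasis : OrthonormalBasis (Fin (finrank ℝ E)) ℝ E :=
  T.isSymmetric_adjoint_comp_self.eigenvectorBasis rfl

def leftSingularVector (j : Fin (finrank ℝ E)) : F :=
  (T.singularValues j)⁻¹ • T (T.rightSingularBasis j)

theorem adjoint_apply_rightSingularBasis (j : Fin (finrank ℝ E)) :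
    adjoint T (T (T.rightSingularBasis j)) = T.singularValues j ^ 2 • T.rightSingularBasis j := by
  rw [T.sq_singularValues_fin rfl]
  exact T.isSymmetric_adjoint_comp_self.apply_eigenvectorBasis rfl j

theorem inner_apply_rightSingularBasis (i j : Fin (finrank ℝ E)) :
    ⟪T (T.rightSingularBasis i), T (T.rightSingularBasis j)⟫ =
      if i = j then T.singularValues i ^ 2 else 0 := by
  rw [← adjoint_inner_right, adjoint_apply_rightSingularBasis, inner_smul_right,
    orthonormal_iff_ite.1 T.rightSingularBasis.orthonormal]
  split_ifs with h <;> simp [h]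

theorem norm_apply_rightSingularBasis (j : Fin (finrank ℝ E)) :
    ‖T (T.rightSingularBasis j)‖ = T.singularValues j := by
  rw [norm_eq_sqrt_real_inner, inner_apply_rightSingularBasis, if_pos rfl,
    Real.sqrt_sq (T.singularValues_nonneg j)]

theorem smul_leftSingularVector (j : Fin (finrank ℝ E)) :
    T.singularValues j • T.leftSingularVector j = T (T.rightSingularBasis j) := by
  rcases eq_or_ne (T.singularValues j) 0 with h | h
  · rw [h, zero_smul, eq_comm, ← norm_eq_zero, norm_apply_rightSingularBasis, h]
  · rw [leftSingularVector, smul_smul, mul_inv_cancel₀ h, one_smul]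

theorem orthonormal_leftSingularVector :
    Orthonormal ℝ fun j : {j : Fin (finrank ℝ E) // T.singularValues j ≠ 0} =>
      T.leftSingularVector j := by
  rw [orthonormal_iff_ite]
  rintro ⟨i, hi⟩ ⟨j, hj⟩
  simp only [leftSingularVector, inner_smul_left, inner_smul_right, inner_apply_rightSingularBasis,
    Subtype.mk.injEq]
  split_ifs with h
  · subst h
    simp only [conj_trivial]
    field_simp
  · simp

theorem norm_leftSingularVector_le_one (j : Fin (finrank ℝ E)) : ‖T.leftSingularVector j‖ ≤ 1 := by
  rcases eq_or_ne (T.singularValues j) 0 with h | h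
  · simp [leftSingularVector, h]
  · exact ((T.orthonormal_leftSingularVector).1 ⟨j, h⟩).le

theorem sum_inner_leftSingularVector_sq_le (x : F) :
    ∑ j, ⟪T.leftSingularVector j, x⟫ ^ 2 ≤ ‖x‖ ^ 2 := by
  classical
  have hzero : ∑ j : {j : Fin (finrank ℝ E) // ¬T.singularValues j ≠ 0},
      ⟪T.leftSingularVector j, x⟫ ^ 2 = 0 :=
    Fintype.sum_eq_zero _ fun ⟨j, hj⟩ => by simp [leftSingularVector, not_not.1 hj]
  rw [← Fintype.sum_subtype_add_sum_subtype fun j : Fin (finrank ℝ E) => T.singularValues j ≠ 0,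
    hzero, add_zero]
  simpa [Real.norm_eq_abs, sq_abs] using
    (T.orthonormal_leftSingularVector).sum_inner_products_le x (s := univ)

theorem norm_adjoint_sq_eq_sum (x : F) :
    ‖adjoint T x‖ ^ 2 = ∑ j, ⟪T (T.rightSingularBasis j), x⟫ ^ 2 := by
  simp_rw [← T.rightSingularBasis.sum_sq_inner_right (adjoint T x), adjoint_inner_right]

theorem sum_range_sq_singularValues_of_le {k : ℕ} (hk : finrank ℝ T.range ≤ k) :
    ∑ i ∈ Finset.range k, T.singularValues i ^ 2 =
      ∑ i ∈ Finset.range (finrank ℝ T.range), T.singularValues i ^ 2 := by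
  refine (sum_subset (Finset.range_subset_range.2 hk) fun i _ hi => ?_).symm
  rw [T.singularValues_eq_zero_iff_le_finrank_range.2 (by simpa using hi), sq, mul_zero]

-- Ky Fan's inequality.
theorem sum_norm_adjoint_sq_le {k : ℕ} {u : Fin k → F} (hu : Orthonormal ℝ u) :
    ∑ i, ‖adjoint T (u i)‖ ^ 2 ≤ ∑ j ∈ Finset.range k, T.singularValues j ^ 2 := by
  set t : Fin (finrank ℝ E) → ℝ := fun j => ∑ i, ⟪T.leftSingularVector j, u i⟫ ^ 2
  have hsum : ∑ i, ‖adjoint T (u i)‖ ^ 2 = ∑ j : Fin _, T.singularValues j ^ 2 * t j := by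
    simp_rw [norm_adjoint_sq_eq_sum, ← smul_leftSingularVector, inner_smul_left, t, mul_sum]
    rw [sum_comm]
    simp [mul_pow]
  have ht1 : ∀ j, t j ≤ 1 := fun j => by
    calc t j = ∑ i, ‖⟪u i, T.leftSingularVector j⟫‖ ^ 2 := by
          simp [t, real_inner_comm, Real.norm_eq_abs, sq_abs]
      _ ≤ ‖T.leftSingularVector j‖ ^ 2 := hu.sum_inner_products_le _
      _ ≤ 1 := pow_le_one₀ (norm_nonneg _) (T.norm_leftSingularVector_le_one j)
  have htk : ∑ j, t j ≤ k := by
    calc ∑ j, t j = ∑ i, ∑ j, ⟪T.leftSingularVector j, u i⟫ ^ 2 := sum_comm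
      _ ≤ ∑ i : Fin k, ‖u i‖ ^ 2 := sum_le_sum fun i _ => T.sum_inner_leftSingularVector_sq_le _
      _ = k := by simp [hu.1]
  rw [hsum]
  exact sum_mul_le_sum_range_of_antitone
    (fun i j hij => pow_le_pow_left₀ (T.singularValues_nonneg j) (T.singularValues_antitone hij) 2)
    (fun j => sq_nonneg _) (fun j => sum_nonneg fun i _ => sq_nonneg _) ht1 htk

theorem sum_norm_adjoint_sq {ι : Type*} [Fintype ι] (u : OrthonormalBasis ι ℝ F) :
    ∑ i, ‖adjoint T (u i)‖ ^ 2 =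
      ∑ j ∈ Finset.range (finrank ℝ T.range), T.singularValues j ^ 2 := by
  simp_rw [norm_adjoint_sq_eq_sum]
  rw [sum_comm]
  simp_rw [u.sum_sq_inner_left, norm_apply_rightSingularBasis]
  rw [Fin.sum_univ_eq_sum_range (fun j => T.singularValues j ^ 2),
    sum_range_sq_singularValues_of_le _ T.finrank_range_le]

theorem sum_mul_sq_singularValues_le {m : ℕ} (u : OrthonormalBasis (Fin m) ℝ F) {c : Fin m → ℝ}
    (hc : Monotone c) :
    ∑ i, c i * T.singularValues i ^ 2 ≤ ∑ i, c i * ‖adjoint T (u i)‖ ^ 2 := by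
  set c' : ℕ → ℝ := fun k => if h : k < m then c ⟨k, h⟩ else 0
  set ρ : ℕ → ℝ := fun k => if h : k < m then ‖adjoint T (u ⟨k, h⟩)‖ ^ 2 else 0
  have hρ : ∀ k (hk : k ≤ m),
      ∑ j ∈ Finset.range k, ρ j = ∑ i : Fin k, ‖adjoint T (u (Fin.castLE hk i))‖ ^ 2 := by
    intro k hk
    rw [← Fin.sum_univ_eq_sum_range]
    exact sum_congr rfl fun i _ => dif_pos (i.2.trans_le hk)
  have hr : finrank ℝ T.range ≤ m := by
    simpa using (Submodule.finrank_le T.range).trans (finrank_eq_card_basis u.toBasis).le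
  have key := sum_range_mul_le_sum_range_mul_of_sum_range_le (c := c') (x := ρ)
    (y := fun k => T.singularValues k ^ 2) (n := m) ?_ ?_ ?_
  · convert key using 1 <;> rw [← Fin.sum_univ_eq_sum_range] <;>
      exact sum_congr rfl fun i _ => by simp [c', ρ]
  · rintro a ha b hb hab
    simp only [c', dif_pos (show a < m from ha), dif_pos (show b < m from hb)]
    exact hc hab
  · intro k hk
    rw [hρ k hk.le]
    exact T.sum_norm_adjoint_sq_le (u.orthonormal.comp _ (Fin.castLE_injective _))
  · rw [hρ m le_rfl, sum_range_sq_singularValues_of_le _ hr]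
    exact T.sum_norm_adjoint_sq u

theorem exists_orthonormalBasis_eq_leftSingularVector {m : ℕ} (hm : finrank ℝ F = m) :
    ∃ b : OrthonormalBasis (Fin m) ℝ F, ∀ (i : Fin m) (j : Fin (finrank ℝ E)),
      (i : ℕ) = j → T.singularValues j ≠ 0 → b i = T.leftSingularVector j := by
  set r := finrank ℝ T.range
  set x : Fin m → F := fun i =>
    if h : (i : ℕ) < finrank ℝ E then T.leftSingularVector ⟨i, h⟩ else 0
  set f : {i : Fin m | (i : ℕ) < r} → {j : Fin (finrank ℝ E) // T.singularValues j ≠ 0} :=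
    fun i => ⟨⟨i.1, i.2.trans_le T.finrank_range_le⟩,
      (T.singularValues_pos_iff_lt_finrank_range.2 i.2).ne'⟩
  have hx : Orthonormal ℝ ({i : Fin m | (i : ℕ) < r}.domRestrict x) := by
    convert T.orthonormal_leftSingularVector.comp f fun i i' h => by
      simpa [f, Fin.ext_iff, Subtype.ext_iff] using h
    ext i : 1
    simp [x, f, Set.domRestrict, i.2.trans_le T.finrank_range_le]
  obtain ⟨b, hb⟩ := hx.exists_orthonormalBasis_extension_of_card_eq (by simpa using hm)
  refine ⟨b, fun i j hij hj => ?_⟩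
  have hi : (i : ℕ) < r := hij ▸ T.singularValues_pos_iff_lt_finrank_range.1 (by
    have := T.singularValues_nonneg j; positivity)
  rw [hb i hi]
  simp [x, hij]

theorem exists_orthonormalBasis_norm_adjoint_sq_eq {m : ℕ} (hm : finrank ℝ F = m) :
    ∃ b : OrthonormalBasis (Fin m) ℝ F, ∀ i, ‖adjoint T (b i)‖ ^ 2 = T.singularValues i ^ 2 := by
  obtain ⟨b, hb⟩ := T.exists_orthonormalBasis_eq_leftSingularVector hm
  refine ⟨b, fun i => ?_⟩
  have hinner : ∀ j : Fin (finrank ℝ E),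
      ⟪T (T.rightSingularBasis j), b i⟫ = if (i : ℕ) = j then T.singularValues j else 0 := by
    intro j
    rcases eq_or_ne (T.singularValues j) 0 with hj | hj
    · rw [← smul_leftSingularVector, hj]
      simp
    have hjm : (j : ℕ) < m := hm ▸ (T.singularValues_pos_iff_lt_finrank_range.1
      ((T.singularValues_nonneg j).lt_of_ne hj.symm)).trans_le (Submodule.finrank_le _)
    rw [← smul_leftSingularVector, ← hb ⟨j, hjm⟩ j rfl hj, inner_smul_left,
      orthonormal_iff_ite.1 b.orthonormal]
    simp [Fin.ext_iff, eq_comm]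
  rw [norm_adjoint_sq_eq_sum]
  simp_rw [hinner, ite_pow, zero_pow two_ne_zero]
  rw [Fin.sum_univ_eq_sum_range (fun k => if (i : ℕ) = k then T.singularValues k ^ 2 else 0),
    sum_ite_eq]
  split_ifs with h
  · rfl
  · rw [T.singularValues_of_finrank_le (by simpa using h), sq, zero_mul]

end LinearMap

theorem Fin.sum_castLE_eq_sum {M : Type*} [AddCommMonoid M] {k m : ℕ} (h : k ≤ m)
    (g : Fin m → M) (hg : ∀ i : Fin m, k ≤ i → g i = 0) :
    ∑ j : Fin k, g (Fin.castLE h j) = ∑ i, g i := by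
  rw [← sum_subset (subset_univ (univ.map (Fin.castLEEmb h))), sum_map]
  · rfl
  exact fun i _ hi => hg i (not_lt.1 fun hik => hi (mem_map.2 ⟨⟨i, hik⟩, mem_univ _, rfl⟩))

theorem LinearMap.IsSymmetric.eigenvalues_congr {𝕜 E : Type*} [RCLike 𝕜] [NormedAddCommGroup E]
    [InnerProductSpace 𝕜 E] [FiniteDimensional 𝕜 E] {S₁ S₂ : E →ₗ[𝕜] E} (h : S₁ = S₂)
    (h₁ : S₁.IsSymmetric) (h₂ : S₂.IsSymmetric) {n : ℕ} (hn : finrank 𝕜 E = n) :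
    h₁.eigenvalues hn = h₂.eigenvalues hn := by
  subst h; rfl

section Matrix

variable {P Q : ℕ}

theorem exists_perm_svals_eq_singularValues (B : Matrix (Fin P) (Fin Q) ℝ) :
    ∃ τ : Equiv.Perm (Fin Q), ∀ j, svals B j = (toEuclideanLin B).singularValues (τ j) := by
  set T := toEuclideanLin B
  have hA : toEuclideanLin (Bᵀ * B) = LinearMap.adjoint T ∘ₗ T := by
    rw [← toEuclideanLin_conjTranspose_eq_adjoint, conjTranspose_eq_transpose_of_trivial]
    exact toLpLin_mul ..
  refine ⟨(Fintype.equivOfCardEq (Fintype.card_fin _)).symm.trans (finCongr (Fintype.card_fin Q)),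
    fun j => ?_⟩
  rw [svals, IsHermitian.eigenvalues, IsHermitian.eigenvalues₀,
    LinearMap.IsSymmetric.eigenvalues_congr hA _ T.isSymmetric_adjoint_comp_self]
  exact (T.singularValues_fin _ _).symm

theorem svalsDesc_eq_singularValues (B : Matrix (Fin P) (Fin Q) ℝ) (j : Fin Q) :
    svalsDesc B j = (toEuclideanLin B).singularValues j := by
  obtain ⟨τ, hτ⟩ := exists_perm_svals_eq_singularValues B
  set g : Fin Q → ℝ := fun j => -(toEuclideanLin B).singularValues j
  have hg : Monotone g := fun i j hij => neg_le_neg ((toEuclideanLin B).singularValues_antitone hij)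
  have hsort := Tuple.comp_perm_comp_sort_eq_comp_sort (f := g) (σ := τ)
  rw [Tuple.sort_eq_refl_iff_monotone.2 hg,
    show g ∘ τ = fun i => -svals B i from funext fun i => by simp [g, hτ]] at hsort
  simpa [svalsDesc, g] using congrFun hsort j

theorem sum_svalsDesc_sq_div_eq (B : Matrix (Fin P) (Fin Q) ℝ) (s : Fin P → ℝ) :
    ∑ j : Fin (min P Q), svalsDesc B (Fin.castLE (min_le_right P Q) j) ^ 2
        / s (Fin.castLE (min_le_left P Q) j) ^ 2 =
      ∑ i, (s i)⁻¹ ^ 2 * (toEuclideanLin B).singularValues i ^ 2 := by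
  simp_rw [svalsDesc_eq_singularValues, Fin.val_castLE, div_eq_inv_mul, ← inv_pow]
  refine Fin.sum_castLE_eq_sum _ (fun i => (s i)⁻¹ ^ 2 * (toEuclideanLin B).singularValues i ^ 2)
    fun i hi => ?_
  rw [(toEuclideanLin B).singularValues_of_finrank_le (by simp; omega),
    zero_pow two_ne_zero, mul_zero]

theorem frobSq_diagonal_inv_mul (B : Matrix (Fin P) (Fin Q) ℝ) (U : Matrix (Fin P) (Fin P) ℝ)
    {s : Fin P → ℝ} (hs : ∀ i, s i ≠ 0) :
    frobSq ((diagonal s)⁻¹ * Uᵀ * B) =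
      ∑ i, (s i)⁻¹ ^ 2 * ‖LinearMap.adjoint (toEuclideanLin B) (WithLp.toLp 2 (Uᵀ i))‖ ^ 2 := by
  have hinv : (diagonal s)⁻¹ = diagonal fun i => (s i)⁻¹ :=
    inv_eq_right_inv (by simp [diagonal_mul_diagonal, hs])
  rw [← toEuclideanLin_conjTranspose_eq_adjoint, conjTranspose_eq_transpose_of_trivial, hinv,
    Matrix.mul_assoc, frobSq]
  refine sum_congr rfl fun i _ => ?_
  rw [EuclideanSpace.real_norm_sq_eq, mul_sum]
  refine sum_congr rfl fun j _ => ?_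
  rw [diagonal_mul]
  simp [mul_apply, mulVec, dotProduct, mul_pow, mul_comm]

theorem exists_orthonormalBasis_eq_col {U : Matrix (Fin P) (Fin P) ℝ}
    (hU : U ∈ orthogonalGroup (Fin P) ℝ) :
    ∃ u : OrthonormalBasis (Fin P) ℝ (EuclideanSpace ℝ (Fin P)),
      ∀ i, u i = WithLp.toLp 2 (Uᵀ i) := by
  have ho : Orthonormal ℝ fun i => WithLp.toLp 2 (Uᵀ i) := by
    rw [orthonormal_iff_ite]
    intro i j
    rw [inner_matrix_col_col, conjTranspose_eq_transpose_of_trivial,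
      (mem_orthogonalGroup_iff' (Fin P) ℝ).1 hU, one_apply]
  have ho' : Orthonormal ℝ (Set.univ.domRestrict fun i => WithLp.toLp 2 (Uᵀ i)) :=
    ho.comp _ Subtype.val_injective
  obtain ⟨u, hu⟩ := ho'.exists_orthonormalBasis_extension_of_card_eq (by simp)
  exact ⟨u, fun i => hu i trivial⟩

end Matrix

/-- alignment step of the equivalent-optimization lemma. For a diagonal
matrix `S` with positive nonincreasing diagonal `s`, the Frobenius norm `‖S⁻¹ Uᵀ B‖_F²` over
orthogonal `U` is at least `Σ_j σ_j(B)²/s_j²`, and this bound is attained. -/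
theorem alignment_step {P Q : ℕ} (B : Matrix (Fin P) (Fin Q) ℝ)
    (s : Fin P → ℝ) (hs : Antitone s) (hpos : ∀ i, 0 < s i) :
    (∀ U ∈ Matrix.orthogonalGroup (Fin P) ℝ,
      ∑ j : Fin (min P Q), (svalsDesc B (Fin.castLE (min_le_right P Q) j)) ^ 2
          / (s (Fin.castLE (min_le_left P Q) j)) ^ 2
        ≤ frobSq ((Matrix.diagonal s)⁻¹ * Uᵀ * B)) ∧
    (∃ U ∈ Matrix.orthogonalGroup (Fin P) ℝ,
      frobSq ((Matrix.diagonal s)⁻¹ * Uᵀ * B)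
        = ∑ j : Fin (min P Q), (svalsDesc B (Fin.castLE (min_le_right P Q) j)) ^ 2
          / (s (Fin.castLE (min_le_left P Q) j)) ^ 2) := by
  have hne : ∀ i, s i ≠ 0 := fun i => (hpos i).ne'
  have hc : Monotone fun i => (s i)⁻¹ ^ 2 := fun i j hij =>
    pow_le_pow_left₀ (inv_nonneg.2 (hpos i).le) (inv_anti₀ (hpos j) (hs hij)) 2
  rw [sum_svalsDesc_sq_div_eq]
  constructor
  · intro U hU
    obtain ⟨u, hu⟩ := exists_orthonormalBasis_eq_col hU
    rw [frobSq_diagonal_inv_mul B U hne]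
    simp_rw [← hu]
    exact (toEuclideanLin B).sum_mul_sq_singularValues_le u hc
  · obtain ⟨b, hb⟩ :=
      (toEuclideanLin B).exists_orthonormalBasis_norm_adjoint_sq_eq finrank_euclideanSpace_fin
    refine ⟨_, (EuclideanSpace.basisFun (Fin P) ℝ).toMatrix_orthonormalBasis_mem_orthogonal b, ?_⟩
    rw [frobSq_diagonal_inv_mul B _ hne]
    exact sum_congr rfl fun i _ => by rw [← hb i]; rfl
end
end

section
/- Let ω be an admissible penalty that is lower semicontinuous, and suppose that for every v ≥ 0 the set of minimizers of z ↦ ω(z) + v²/z² over z ≥ 1 is nonempty; let s(v) denote its smallest element. Then s(0) = 1, and s is nondecreasing: 0 ≤ v₁ ≤ v₂ implies s(v₁) ≤ s(v₂). -/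
open Matrix Set

noncomputable section

/-- For a lower semicontinuous admissible penalty whose effective-penalty
minimizer set is nonempty for each `v ≥ 0`, the smallest minimizer `s(v)` satisfies `s(0) = 1`
and is nondecreasing in `v`. -/
theorem kernel_alignment_monotone (ω : ℝ → ℝ) (hω : Admissible ω)
    (hlsc : LowerSemicontinuous ω) (s : ℝ → ℝ)
    (hs : ∀ v : ℝ, 0 ≤ v →
      IsLeast {z : ℝ | 1 ≤ z ∧
        ∀ z' : ℝ, 1 ≤ z' → ω z + v ^ 2 / z ^ 2 ≤ ω z' + v ^ 2 / z' ^ 2} (s v)) :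
    s 0 = 1 ∧ ∀ v₁ v₂ : ℝ, 0 ≤ v₁ → v₁ ≤ v₂ → s v₁ ≤ s v₂ := by
  obtain ⟨hnn, h1, -, -⟩ := hω
  have h0 := hs 0 le_rfl
  constructor
  · have hmem : (1:ℝ) ∈ {z : ℝ | 1 ≤ z ∧
        ∀ z' : ℝ, 1 ≤ z' → ω z + (0:ℝ) ^ 2 / z ^ 2 ≤ ω z' + (0:ℝ) ^ 2 / z' ^ 2} := by
      refine ⟨le_rfl, fun z' hz' => ?_⟩
      have hz0 : (0:ℝ) < z' := lt_of_lt_of_le one_pos hz'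
      have : (0:ℝ)^2 / z'^2 = 0 := by simp
      simp [h1, this, hnn z']
    exact le_antisymm (h0.2 hmem) h0.1.1
  · intro v₁ v₂ hv₁ h12
    rcases eq_or_lt_of_le h12 with rfl | hlt
    · exact le_rfl
    by_contra hba
    push_neg at hba
    obtain ⟨⟨ha1, haopt⟩, -⟩ := hs v₁ hv₁
    obtain ⟨⟨hb1, hbopt⟩, -⟩ := hs v₂ (hv₁.trans h12)
    set a := s v₁
    set b := s v₂
    have hI1 := haopt b hb1
    have hI2 := hbopt a ha1
    have hb0 : (0:ℝ) < b := lt_of_lt_of_le one_pos hb1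
    have ha0 : (0:ℝ) < a := hb0.trans hba
    have key : v₂ ^ 2 / b ^ 2 + v₁ ^ 2 / a ^ 2 ≤ v₂ ^ 2 / a ^ 2 + v₁ ^ 2 / b ^ 2 := by
      linarith
    have hpos : (0:ℝ) < a ^ 2 * b ^ 2 := by positivity
    have key2 : v₂ ^ 2 * a ^ 2 + v₁ ^ 2 * b ^ 2 ≤ v₂ ^ 2 * b ^ 2 + v₁ ^ 2 * a ^ 2 := by
      have hbne : (b:ℝ) ^ 2 ≠ 0 := by positivity
      have hane : (a:ℝ) ^ 2 ≠ 0 := by positivity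
      have h := key
      rw [div_add_div _ _ hbne hane, div_add_div _ _ hane hbne,
        div_le_div_iff₀ (by positivity) (by positivity)] at h
      nlinarith [h, hpos]
    have hv2 : 0 < v₂ ^ 2 - v₁ ^ 2 := by nlinarith
    have hab : 0 < a ^ 2 - b ^ 2 := by nlinarith
    nlinarith [mul_pos hv2 hab]
end
end
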